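/- arXiv:2112.12727 — 2 statements merged into one kernel-verified Lean document; each statement's English description precedes it below -/
import Mathlib

section
/- Let F be a finite field, f, g, h ∈ F[X] with deg f, deg g ≤ M−1 and deg h ≤ 2M−2, and let α ∈ F be arbitrary. If f·g ≠ h, then for r chosen uniformly at random from F, the probability that r·(f(r)·g(r) − h(r)) + α = 0 is at most (2M−1)/|F|. -/
/-! The set of bad challenges `r` is the zero set of `Q = X * (f * g - h) + C α`. Since
`f * g - h ≠ 0`, the factor `X` makes `Q` of degree at least one, so the constant shift `α`
cannot cancel it; `Q` is then a nonzero polynomial of degree at most `2M - 1` and has at most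
that many roots. -/

open Polynomial Finset

namespace Polynomial

theorem card_filter_eval_eq_zero_le_natDegree {R : Type*} [CommRing R] [IsDomain R] [Fintype R]
    [DecidableEq R] {p : R[X]} (hp : p ≠ 0) : #{r | p.eval r = 0} ≤ p.natDegree :=
  card_le_degree_of_subset_roots fun _ hr ↦ (mem_roots hp).2 (mem_filter.1 hr).2

theorem X_mul_add_C_ne_zero {R : Type*} [Semiring R] [Nontrivial R] {p : R[X]} (hp : p ≠ 0)
    (a : R) : X * p + C a ≠ 0 := fun h ↦ by
  simpa [natDegree_X_mul hp] using congrArg natDegree h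

theorem natDegree_X_mul_add_C_le {R : Type*} [Semiring R] {p : R[X]} {n : ℕ}
    (hp : p.natDegree ≤ n) (a : R) : (X * p + C a).natDegree ≤ n + 1 := by
  rw [natDegree_add_C]
  exact (natDegree_mul_le_of_le natDegree_X_le hp).trans_eq (add_comm 1 n)

end Polynomial

theorem stmt_1_general {F : Type*} [Field F] [Fintype F] [DecidableEq F]
    (M : ℕ) (hM : 1 ≤ M) (f g h : F[X]) (α : F)
    (hf : f.degree ≤ (M - 1 : ℕ)) (hg : g.degree ≤ (M - 1 : ℕ))
    (hh : h.degree ≤ (2 * M - 2 : ℕ))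
    (hne : f * g ≠ h) :
    ((Finset.univ.filter
        (fun r : F => r * (f.eval r * g.eval r - h.eval r) + α = 0)).card : ℝ) /
        (Fintype.card F : ℝ) ≤ (2 * M - 1 : ℕ) / (Fintype.card F : ℝ) := by
  set Q : F[X] := X * (f * g - h) + C α
  have hQ : Q ≠ 0 := X_mul_add_C_ne_zero (sub_ne_zero.2 hne) α
  have hdiff : (f * g - h).natDegree ≤ 2 * M - 2 :=
    natDegree_sub_le_of_le
      ((natDegree_mul_le_of_le (natDegree_le_iff_degree_le.2 hf)
        (natDegree_le_iff_degree_le.2 hg)).trans (by omega : M - 1 + (M - 1) ≤ 2 * M - 2))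
      (natDegree_le_iff_degree_le.2 hh) |>.trans_eq (max_self _)
  have hQdeg : Q.natDegree ≤ 2 * M - 1 :=
    (natDegree_X_mul_add_C_le hdiff α).trans (by omega)
  have hbad : #{r | r * (f.eval r * g.eval r - h.eval r) + α = 0} ≤ 2 * M - 1 := by
    have := card_filter_eval_eq_zero_le_natDegree hQ
    simp only [Q, eval_add, eval_mul, eval_X, eval_sub, eval_C] at this
    exact this.trans hQdeg
  gcongr

theorem stmt_1 {F : Type*} [Field F] [Fintype F] [DecidableEq F]
    (M : ℕ) (hM : 1 ≤ M) (f g h : F[X]) (α : F)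
    (hf : f.degree ≤ (M - 1 : ℕ)) (hg : g.degree ≤ (M - 1 : ℕ))
    (hh : h.degree ≤ (2 * M - 2 : ℕ))
    (hcard : 2 * M - 1 ≤ Fintype.card F)
    (hne : f * g ≠ h) :
    ((Finset.univ.filter
        (fun r : F => r * (f.eval r * g.eval r - h.eval r) + α = 0)).card : ℝ) /
        (Fintype.card F : ℝ) ≤ (2 * M - 1 : ℕ) / (Fintype.card F : ℝ) :=
  stmt_1_general M hM f g h α hf hg hh hne
end

section
/- Let S be a set of n clients with honest subset H, |H| = n − m, and let the final aggregate be computed by robust Reed-Solomon reconstruction from shares of Σ_{i ∈ V} u_i where V ⊇ H is the accepted set. If m < ⌊(n−1)/3⌋ and at most m shares of the aggregate are erroneous or withheld, then the reconstructed aggregate equals Σ_{i∈H} u_i + Σ_{i∈V\H} u_i exactly; i.e., the output decomposes as the honest aggregate plus contributions from a subset of well-formed malicious clients. -/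
open Polynomial

theorem stmt_16 {F : Type*} [Field F] [DecidableEq F]
    (n m : ℕ) (hm : m < (n - 1) / 3)
    (u : Fin n → F) (H V : Finset (Fin n)) (hHV : H ⊆ V)
    (hH : H.card = n - m)
    (x : Fin n → F) (hinj : Function.Injective x)
    (P : F[X]) (hP : P.degree ≤ (m : ℕ)) (hP0 : P.eval 0 = ∑ i ∈ V, u i)
    (σ : Fin n → F)
    (herr : (Finset.univ.filter (fun i => σ i ≠ P.eval (x i))).card ≤ m) :
    ∀ Q : F[X], Q.degree ≤ (m : ℕ) →
      (Finset.univ.filter (fun i => σ i ≠ Q.eval (x i))).card ≤ m →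
      Q.eval 0 = (∑ i ∈ H, u i) + ∑ i ∈ V \ H, u i := by
  intro Q hQ herrQ
  classical
  -- n > 3m
  have h1 : m + 1 ≤ (n - 1) / 3 := hm
  have h2 : (m + 1) * 3 ≤ ((n - 1) / 3) * 3 := Nat.mul_le_mul_right 3 h1
  have h3 : ((n - 1) / 3) * 3 ≤ n - 1 := Nat.div_mul_le_self _ _
  have hn : 3 * m < n := by omega
  set A := Finset.univ.filter (fun i => σ i ≠ P.eval (x i)) with hA
  set B := Finset.univ.filter (fun i => σ i ≠ Q.eval (x i)) with hB
  set good : Finset (Fin n) := Finset.univ \ (A ∪ B) with hgood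
  have hcardAB : (A ∪ B).card ≤ 2 * m := by
    have := Finset.card_union_le A B
    omega
  have hcardgood : m < good.card := by
    have : good.card = n - (A ∪ B).card := by
      rw [hgood, Finset.card_sdiff_of_subset (Finset.subset_univ _), Finset.card_univ,
        Fintype.card_fin]
    omega
  have hPQ : P - Q = 0 := by
    apply Polynomial.eq_zero_of_natDegree_lt_card_of_eval_eq_zero' (P - Q)
      (good.image x)
    · intro y hy
      obtain ⟨i, hi, rfl⟩ := Finset.mem_image.mp hy
      have hiA : i ∉ A := fun h => (Finset.mem_sdiff.mp hi).2 (Finset.mem_union_left _ h)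
      have hiB : i ∉ B := fun h => (Finset.mem_sdiff.mp hi).2 (Finset.mem_union_right _ h)
      have hPi : σ i = P.eval (x i) := by
        by_contra h; exact hiA (Finset.mem_filter.mpr ⟨Finset.mem_univ _, h⟩)
      have hQi : σ i = Q.eval (x i) := by
        by_contra h; exact hiB (Finset.mem_filter.mpr ⟨Finset.mem_univ _, h⟩)
      simp [← hPi, ← hQi]
    · have hdeg : (P - Q).natDegree ≤ m :=
        Polynomial.natDegree_le_iff_degree_le.mpr
          (le_trans (Polynomial.degree_sub_le P Q) (max_le hP hQ))
      rw [Finset.card_image_of_injective _ hinj]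
      omega
  have hQP : Q = P := by
    have := sub_eq_zero.mp hPQ
    exact this.symm
  rw [hQP, hP0, ← Finset.sum_sdiff hHV]
  ring
end
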